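/- arXiv:2603.05038 — 2 statements merged into one kernel-verified Lean document; each statement's English description precedes it below -/
import Mathlib

section
/- Define $\sec : \mathbb{Q}\langle Y\rangle \to \mathbb{Q}\langle X\rangle$ by $\sec(w) = \sum_{i \ge 0} \frac{(-1)^i}{i!}\gamma_0^i(w)\, x_0^i$ (a finite sum for each word), where $\mathbb{Q}\langle Y\rangle$ is identified with the subalgebra of $\mathbb{Q}\langle x_0, x_1\rangle$ generated by $y_n = x_0^{n-1}x_1$, and $\gamma_0$ is the derivation of $\mathbb{Q}\langle X\rangle$ with $\gamma_0(x_0) = 1$, $\gamma_0(x_1) = 0$. Then $\pi_Y \circ \sec = \mathrm{id}_{\mathbb{Q}\langle Y\rangle}$, and $\sec$ is a two-sided inverse of the restriction of $\pi_Y$ to $\ker(\gamma_0)$; in particular $\sec(\mathbb{Q}\langle Y\rangle) = \ker(\gamma_0)$. -/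
noncomputable section

/-- The free noncommutative `ℚ`-algebra on `x₀, x₁`. -/
abbrev QX : Type := FreeAlgebra ℚ (Fin 2)

noncomputable def x0 : QX := FreeAlgebra.ι ℚ 0
noncomputable def x1 : QX := FreeAlgebra.ι ℚ 1

/-- The subalgebra `ℚ⟨Y⟩ ⊆ ℚ⟨X⟩` generated by the elements `yₙ = x₀^(n-1) x₁`. -/
noncomputable def Ysub : Subalgebra ℚ QX :=
  Algebra.adjoin ℚ (Set.range fun n : ℕ => x0 ^ n * x1)

/-- Let `γ₀` be the derivation of `ℚ⟨X⟩` with `γ₀(x₀) = 1`, `γ₀(x₁) = 0`, let `π_Y` be the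
projection onto `ℚ⟨Y⟩` (the map vanishing on `ℚ⟨X⟩x₀` and fixing `ℚ⟨Y⟩`, arising from
`ℚ⟨X⟩ = ℚ⟨Y⟩ ⊕ ℚ⟨X⟩x₀`), and let `sec` be given by
`sec(w) = ∑ᵢ ((-1)^i/i!) γ₀^i(w) x₀^i` (a finite sum on each element). Then
`π_Y ∘ sec = id` on `ℚ⟨Y⟩`, `sec` is a two-sided inverse of `π_Y` restricted to `ker γ₀`, and
`sec(ℚ⟨Y⟩) = ker γ₀`. -/
theorem stmt_9
    (γ : Module.End ℚ QX)
    (hγleib : ∀ a b : QX, γ (a * b) = γ a * b + a * γ b)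
    (hγ0 : γ x0 = 1) (hγ1 : γ x1 = 0)
    (π : QX →ₗ[ℚ] QX)
    (hπ0 : ∀ u : QX, π (u * x0) = 0)
    (hπfix : ∀ w ∈ Ysub, π w = w)
    (s : QX →ₗ[ℚ] QX)
    (hs : ∀ w : QX, ∃ N : ℕ, (∀ i : ℕ, N ≤ i → (γ ^ i) w = 0) ∧
        s w = ∑ i ∈ Finset.range N,
          ((-1 : ℚ) ^ i / (i.factorial : ℚ)) • ((γ ^ i) w * x0 ^ i)) :
    (∀ w ∈ Ysub, π (s w) = w) ∧
    (∀ v : QX, γ v = 0 → s (π v) = v) ∧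
    (∀ w ∈ Ysub, γ (s w) = 0) ∧
    (s '' (Ysub : Set QX) = {v : QX | γ v = 0}) := by
  have hγone : γ (1 : QX) = 0 := by
    have h := hγleib 1 1
    simp only [mul_one, one_mul] at h
    exact (left_eq_add.mp h)
  have hγpow : ∀ i : ℕ, γ (x0 ^ i) = (i : ℚ) • x0 ^ (i - 1) := by
    intro i
    induction i with
    | zero => simpa using hγone
    | succ n ih =>
      rw [pow_succ, hγleib, ih, hγ0, mul_one]
      cases n with
      | zero => simp
      | succ m =>
        rw [smul_mul_assoc, ← pow_succ]
        simp only [Nat.succ_sub_one, Nat.add_sub_cancel]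
        push_cast
        module
  have hnil : ∀ w : QX, ∃ N, ∀ i, N ≤ i → (γ ^ i) w = 0 :=
    fun w => ⟨(hs w).choose, (hs w).choose_spec.1⟩
  -- flexible sum formula
  have hs' : ∀ (w : QX) (M : ℕ), (∀ i, M ≤ i → (γ ^ i) w = 0) →
      s w = ∑ i ∈ Finset.range M,
        ((-1 : ℚ) ^ i / (i.factorial : ℚ)) • ((γ ^ i) w * x0 ^ i) := by
    intro w M hM
    obtain ⟨N, hN, hw⟩ := hs w
    have e1 : ∀ (K : ℕ), K ≤ max N M → (∀ i, K ≤ i → (γ ^ i) w = 0) →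
        ∑ i ∈ Finset.range (max N M), ((-1 : ℚ) ^ i / (i.factorial : ℚ)) • ((γ ^ i) w * x0 ^ i)
        = ∑ i ∈ Finset.range K, ((-1 : ℚ) ^ i / (i.factorial : ℚ)) • ((γ ^ i) w * x0 ^ i) := by
      intro K hKle hK
      refine (Finset.sum_subset (Finset.range_subset_range.2 hKle) ?_).symm
      intro i _ hni
      rw [hK i (by simpa using hni), zero_mul, smul_zero]
    rw [hw, ← e1 N (le_max_left _ _) hN, e1 M (le_max_right _ _) hM]
  -- iterate of γ on b * x0
  have hiter : ∀ (b : QX) (i : ℕ),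
      (γ ^ i) (b * x0) = (γ ^ i) b * x0 + (i : ℚ) • (γ ^ (i - 1)) b := by
    intro b i
    induction i with
    | zero => simp
    | succ n ih =>
      rw [pow_succ', Module.End.mul_apply, ih, map_add, map_smul, hγleib, hγ0, mul_one,
        ← Module.End.mul_apply γ, ← pow_succ']
      cases n with
      | zero => simp
      | succ m =>
        rw [Nat.succ_sub_one, Nat.add_sub_cancel, ← Module.End.mul_apply γ, ← pow_succ']
        push_cast
        module
  -- coefficient identity
  have hc : ∀ i : ℕ, (-((((i+1:ℕ)):ℚ) * ((-1:ℚ)^(i+1) / (((i+1):ℕ).factorial : ℚ))))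
      = (-1:ℚ)^i / (i.factorial : ℚ) := by
    intro i
    rw [Nat.factorial_succ]
    have h1 : ((i.factorial : ℚ)) ≠ 0 := Nat.cast_ne_zero.2 i.factorial_ne_zero
    have h2 : ((i:ℚ)+1) ≠ 0 := by positivity
    push_cast
    field_simp
    ring
  -- s kills right multiples of x0
  have hskill : ∀ b : QX, s (b * x0) = 0 := by
    intro b
    obtain ⟨Nb, hNb⟩ := hnil b
    obtain ⟨Nc, hNc⟩ := hnil (b * x0)
    set M := max (Nb + 1) Nc with hM
    set q : ℕ → QX := fun i =>
      (-((i:ℚ) * ((-1:ℚ)^i / (i.factorial : ℚ)))) • ((γ ^ (i-1)) b * x0 ^ i) with hq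
    rw [hs' (b * x0) M (fun i hi => hNc i (le_trans (le_max_right _ _) hi))]
    have key : ∀ i ∈ Finset.range M, ((-1:ℚ)^i / (i.factorial : ℚ)) • ((γ ^ i) (b * x0) * x0 ^ i)
        = q (i+1) - q i := by
      intro i _
      simp only [hq, Nat.add_sub_cancel]
      rw [hiter, add_mul, smul_add, mul_assoc, ← pow_succ', smul_mul_assoc, smul_smul, hc]
      push_cast
      module
    rw [Finset.sum_congr rfl key, Finset.sum_range_sub]
    have hqM : q M = 0 := by
      have : Nb ≤ M - 1 := Nat.le_pred_of_lt (lt_of_lt_of_le (Nat.lt_succ_self _) (le_max_left _ _))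
      simp only [hq]
      rw [hNb (M-1) this, zero_mul, smul_zero]
    have hq0 : q 0 = 0 := by simp [hq]
    rw [hqM, hq0, sub_zero]
  -- γ ∘ s = 0
  have hγs : ∀ w : QX, γ (s w) = 0 := by
    intro w
    obtain ⟨N, hN⟩ := hnil w
    rw [hs' w N hN, map_sum]
    set h : ℕ → QX := fun i =>
      (-((i:ℚ) * ((-1:ℚ)^i / (i.factorial : ℚ)))) • ((γ ^ i) w * x0 ^ (i-1)) with hh
    have key : ∀ i ∈ Finset.range N, γ (((-1:ℚ)^i / (i.factorial : ℚ)) • ((γ ^ i) w * x0 ^ i))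
        = h (i+1) - h i := by
      intro i _
      simp only [hh, Nat.add_sub_cancel]
      rw [map_smul, hγleib, hγpow, ← Module.End.mul_apply γ, ← pow_succ',
        mul_smul_comm, smul_add, smul_smul, hc]
      push_cast
      module
    rw [Finset.sum_congr rfl key, Finset.sum_range_sub]
    have hhN : h N = 0 := by
      simp only [hh]
      rw [hN N le_rfl, zero_mul, smul_zero]
    have hh0 : h 0 = 0 := by simp [hh]
    rw [hhN, hh0, sub_zero]
  -- s fixes ker γ
  have hsfix : ∀ v : QX, γ v = 0 → s v = v := by
    intro v hv
    have h1 : ∀ i, 1 ≤ i → (γ ^ i) v = 0 := by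
      intro i hi
      obtain ⟨j, rfl⟩ := Nat.exists_eq_add_of_le hi
      rw [add_comm, pow_succ, Module.End.mul_apply, hv, map_zero]
    rw [hs' v 1 h1, Finset.sum_range_one]
    simp
  -- part 1 : π (s w) = w for w ∈ Ysub
  have hpart1 : ∀ w ∈ Ysub, π (s w) = w := by
    intro w hw
    obtain ⟨N, hN⟩ := hnil w
    rw [hs' w (max N 1) (fun i hi => hN i (le_trans (le_max_left _ _) hi)), map_sum]
    rw [Finset.sum_eq_single 0]
    · simp [hπfix w hw]
    · intro i _ hi
      obtain ⟨j, rfl⟩ := Nat.exists_eq_succ_of_ne_zero hi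
      rw [map_smul, show ((γ ^ (j+1)) w * x0 ^ (j+1)) = ((γ ^ (j+1)) w * x0 ^ j) * x0 by
        rw [pow_succ x0 j, ← mul_assoc], hπ0, smul_zero]
    · intro h
      exact absurd (Finset.mem_range.2 (lt_of_lt_of_le Nat.one_pos (le_max_right _ _))) h
  -- membership facts for Ysub
  have hyY : ∀ n : ℕ, x0 ^ n * x1 ∈ Ysub := fun n => Algebra.subset_adjoin ⟨n, rfl⟩
  have hx1Y : x1 ∈ Ysub := by simpa using hyY 0
  -- x0 * Ysub ⊆ Ysub + ℚ x0
  have hA : ∀ w ∈ Ysub, x0 * w ∈ Ysub.toSubmodule ⊔ (ℚ ∙ x0) := by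
    intro w hw
    induction hw using Algebra.adjoin_induction with
    | mem x hx =>
      obtain ⟨n, rfl⟩ := hx
      refine Submodule.mem_sup_left ?_
      rw [← mul_assoc, ← pow_succ']
      exact hyY (n+1)
    | algebraMap r =>
      refine Submodule.mem_sup_right ?_
      rw [← Algebra.commutes, ← Algebra.smul_def]
      exact Submodule.smul_mem _ _ (Submodule.mem_span_singleton_self x0)
    | add a b ha hb iha ihb =>
      rw [mul_add]; exact add_mem iha ihb
    | mul a b ha hb iha ihb =>
      rw [← mul_assoc]
      obtain ⟨y, hy, z, hz, hyz⟩ := Submodule.mem_sup.1 iha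
      obtain ⟨c, rfl⟩ := Submodule.mem_span_singleton.1 hz
      rw [← hyz, add_mul, smul_mul_assoc]
      exact add_mem (Submodule.mem_sup_left (Subalgebra.mul_mem _ hy hb))
        (Submodule.smul_mem _ _ ihb)
  -- the big submodule
  set Msub : Submodule ℚ QX :=
    Ysub.toSubmodule ⊔ LinearMap.range (LinearMap.mulRight ℚ x0) with hMsub
  have hx0mem : ∀ u : QX, u * x0 ∈ Msub :=
    fun u => Submodule.mem_sup_right ⟨u, rfl⟩
  have hsuple : Ysub.toSubmodule ⊔ (ℚ ∙ x0) ≤ Msub := by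
    refine sup_le le_sup_left ?_
    rw [Submodule.span_singleton_le_iff_mem]
    simpa using hx0mem 1
  have hmul : ∀ a : QX, ∀ m ∈ Msub, a * m ∈ Msub := by
    intro a
    induction a using FreeAlgebra.induction with
    | grade0 r =>
      intro m hm
      rw [← Algebra.smul_def]
      exact Submodule.smul_mem _ _ hm
    | grade1 x =>
      intro m hm
      obtain ⟨y, hy, z, hz, hyz⟩ := Submodule.mem_sup.1 hm
      obtain ⟨u, rfl⟩ := hz
      simp only [LinearMap.mulRight_apply] at hyz
      rw [← hyz, mul_add, ← mul_assoc]
      refine add_mem ?_ (hx0mem _)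
      fin_cases x
      · exact hsuple (hA y hy)
      · exact Submodule.mem_sup_left (Subalgebra.mul_mem _ hx1Y hy)
    | mul a b iha ihb =>
      intro m hm
      rw [mul_assoc]
      exact iha _ (ihb m hm)
    | add a b iha ihb =>
      intro m hm
      rw [add_mul]
      exact add_mem (iha m hm) (ihb m hm)
  have hMtop : ∀ v : QX, v ∈ Msub := by
    intro v
    simpa using hmul v 1 (Submodule.mem_sup_left (Subalgebra.one_mem Ysub))
  -- decomposition through π
  have hdec : ∀ v : QX, π v ∈ Ysub ∧ ∃ u : QX, v = π v + u * x0 := by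
    intro v
    obtain ⟨y, hy, z, hz, hyz⟩ := Submodule.mem_sup.1 (hMtop v)
    obtain ⟨u, rfl⟩ := hz
    simp only [LinearMap.mulRight_apply] at hyz
    have hπv : π v = y := by
      rw [← hyz, map_add, hπfix y hy, hπ0, add_zero]
    rw [hπv]
    exact ⟨hy, u, hyz.symm⟩
  -- part 2
  have hpart2 : ∀ v : QX, γ v = 0 → s (π v) = v := by
    intro v hv
    obtain ⟨-, u, huv⟩ := hdec v
    have h2 : π v = v - u * x0 := by
      conv_rhs => rw [huv]
      rw [add_sub_cancel_right]
    rw [h2, map_sub, hskill, sub_zero, hsfix v hv]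
  refine ⟨hpart1, hpart2, fun w _ => hγs w, ?_⟩
  ext v
  constructor
  · rintro ⟨w, -, rfl⟩
    exact hγs w
  · intro hv
    exact ⟨π v, (hdec v).1, hpart2 v hv⟩

end
end

section
/- Let $f$ be a homogeneous weight-$p$ element of $\mathbb{Q}\langle X\rangle$ written as $f = \sum_{i=0}^p f_i x_0^i$ with $f_i \in \mathbb{Q}\langle Y\rangle$, and suppose $g \in \mathfrak{Lie}(Y)$ with $f = \sec(g)$. Then for every $i \in \{0, \ldots, p\}$ both $f_i$ and $\overline{f}_i := (-1)^p R_Y(f_i)$ lie in $\mathfrak{Lie}(Y)$ (are primitive for $\Delta_Y$). -/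
open TensorProduct

noncomputable section

/-- The free noncommutative `ℚ`-algebra on generators `y 1, y 2, …`. -/
abbrev QYf : Type := FreeAlgebra ℚ ℕ+

noncomputable def y (n : ℕ+) : QYf := FreeAlgebra.ι ℚ n

/-- The embedding `ℚ⟨Y⟩ → ℚ⟨X⟩`, `yₙ ↦ x₀^(n-1) x₁`. -/
noncomputable def jmap : QYf →ₐ[ℚ] QX :=
  FreeAlgebra.lift ℚ (fun n : ℕ+ => x0 ^ ((n : ℕ) - 1) * x1)

/-- The shuffle coproduct `Δ_Y` on `ℚ⟨Y⟩`. -/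
noncomputable def ΔY : QYf →ₐ[ℚ] QYf ⊗[ℚ] QYf :=
  FreeAlgebra.lift ℚ (fun n : ℕ+ => y n ⊗ₜ[ℚ] 1 + 1 ⊗ₜ[ℚ] y n)

-- values of the derivation on generators
noncomputable def vY (n : ℕ+) : QYf := (((n : ℕ) - 1 : ℕ) : ℚ) • y (n - 1)

noncomputable def φder : QYf →ₐ[ℚ] TrivSqZeroExt QYf QYf :=
  FreeAlgebra.lift ℚ (fun n : ℕ+ => TrivSqZeroExt.inl (y n) + TrivSqZeroExt.inr (vY n))

lemma φder_fst (a : QYf) : (φder a).fst = a := by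
  have : (TrivSqZeroExt.fstHom ℚ QYf QYf).comp φder = AlgHom.id ℚ QYf := by
    apply FreeAlgebra.hom_ext
    funext n
    simp [φder, y]
  exact congrArg (fun f => f a) (congrArg (fun (f : QYf →ₐ[ℚ] QYf) => (f : QYf → QYf)) this)

noncomputable def γY : QYf →ₗ[ℚ] QYf where
  toFun a := (φder a).snd
  map_add' a b := by simp
  map_smul' r a := by simp

lemma γY_apply (a : QYf) : γY a = (φder a).snd := rfl

lemma γY_mul (a b : QYf) : γY (a * b) = a * γY b + γY a * b := by
  simp only [γY_apply, map_mul, TrivSqZeroExt.snd_mul, φder_fst]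
  rw [smul_eq_mul, MulOpposite.smul_eq_mul_unop]
  rfl

lemma γY_gen (n : ℕ+) : γY (y n) = vY n := by
  simp [γY_apply, φder, y]

lemma γY_one : γY (1 : QYf) = 0 := by
  simp [γY_apply]

lemma γY_algebraMap (r : ℚ) : γY (algebraMap ℚ QYf r) = 0 := by
  simp [γY_apply, TrivSqZeroExt.algebraMap_eq_inl']

end
noncomputable section
-- γ(x0^k) = k • x0^(k-1)
lemma gamma_one (γ : Module.End ℚ QX)
    (hγleib : ∀ a b : QX, γ (a * b) = γ a * b + a * γ b) : γ 1 = 0 := by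
  have := hγleib 1 1
  simpa using this

lemma gamma_x0_pow (γ : Module.End ℚ QX)
    (hγleib : ∀ a b : QX, γ (a * b) = γ a * b + a * γ b)
    (hγ0 : γ x0 = 1) :
    ∀ k : ℕ, γ (x0 ^ k) = (k : ℚ) • x0 ^ (k - 1) := by
  intro k
  induction k with
  | zero => simpa using gamma_one γ hγleib
  | succ k ih =>
    rw [pow_succ, hγleib, hγ0, ih, mul_one]
    cases k with
    | zero => simp
    | succ m =>
      rw [show m + 1 - 1 = m from rfl, show m + 1 + 1 - 1 = m + 1 from rfl]
      rw [smul_mul_assoc, ← pow_succ]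
      push_cast
      module

lemma jmap_gen (n : ℕ+) : jmap (y n) = x0 ^ ((n : ℕ) - 1) * x1 := by
  simp [jmap, y]

lemma j_gammaY (γ : Module.End ℚ QX)
    (hγleib : ∀ a b : QX, γ (a * b) = γ a * b + a * γ b)
    (hγ0 : γ x0 = 1) (hγ1 : γ x1 = 0) :
    ∀ a : QYf, γ (jmap a) = jmap (γY a) := by
  intro a
  induction a using FreeAlgebra.induction with
  | grade0 r =>
    rw [γY_algebraMap, map_zero, AlgHom.commutes]
    have : (algebraMap ℚ QX r) = r • (1 : QX) := by simp [Algebra.algebraMap_eq_smul_one]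
    rw [this, map_smul, gamma_one γ hγleib, smul_zero]
  | grade1 n =>
    show γ (jmap (y n)) = jmap (γY (y n))
    have hexp : (((n - 1 : ℕ+) : ℕ) - 1) = ((n : ℕ) - 1 - 1) := by
      rw [PNat.sub_coe]
      split_ifs with h
      · simp
      · have hn1 : n = 1 := le_antisymm (not_lt.mp h) n.one_le
        subst hn1
        simp
    rw [jmap_gen, hγleib, hγ1, mul_zero, add_zero, gamma_x0_pow γ hγleib hγ0,
      γY_gen, vY, map_smul, jmap_gen, hexp, smul_mul_assoc]
  | mul a b ha hb => rw [map_mul, hγleib, ha, hb, γY_mul, map_add, map_mul, map_mul, add_comm]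
  | add a b ha hb => simp [ha, hb]
end
noncomputable section

lemma ΔY_gen (n : ℕ+) : ΔY (y n) = y n ⊗ₜ[ℚ] 1 + 1 ⊗ₜ[ℚ] y n := by
  simp [ΔY, y]

noncomputable def Dten : (QYf ⊗[ℚ] QYf) →ₗ[ℚ] (QYf ⊗[ℚ] QYf) :=
  LinearMap.rTensor QYf γY + LinearMap.lTensor QYf γY

lemma Dten_tmul (a b : QYf) : Dten (a ⊗ₜ[ℚ] b) = γY a ⊗ₜ[ℚ] b + a ⊗ₜ[ℚ] γY b := by
  simp [Dten]

lemma Dten_mul (u v : QYf ⊗[ℚ] QYf) : Dten (u * v) = Dten u * v + u * Dten v := by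
  induction u using TensorProduct.induction_on with
  | zero => simp
  | tmul a b =>
    induction v using TensorProduct.induction_on with
    | zero => simp
    | tmul c d =>
      rw [Algebra.TensorProduct.tmul_mul_tmul, Dten_tmul, Dten_tmul, Dten_tmul,
        γY_mul, γY_mul, add_mul, mul_add, Algebra.TensorProduct.tmul_mul_tmul,
        Algebra.TensorProduct.tmul_mul_tmul, Algebra.TensorProduct.tmul_mul_tmul,
        Algebra.TensorProduct.tmul_mul_tmul, TensorProduct.add_tmul, TensorProduct.tmul_add]
      abel
    | add v₁ v₂ h1 h2 =>
      rw [mul_add, map_add, h1, h2, map_add, mul_add, mul_add]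
      abel
  | add u₁ u₂ h1 h2 =>
    rw [add_mul, map_add, h1, h2, map_add, add_mul, add_mul]
    abel

lemma ΔY_γY (a : QYf) : ΔY (γY a) = Dten (ΔY a) := by
  induction a using FreeAlgebra.induction with
  | grade0 r =>
    rw [γY_algebraMap, map_zero, AlgHom.commutes, Algebra.algebraMap_eq_smul_one, map_smul]
    rw [show (1 : QYf ⊗[ℚ] QYf) = (1 : QYf) ⊗ₜ[ℚ] (1 : QYf) from rfl, Dten_tmul, γY_one]
    simp
  | grade1 n =>
    show ΔY (γY (y n)) = Dten (ΔY (y n))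
    rw [γY_gen, vY, map_smul, ΔY_gen, ΔY_gen, map_add, Dten_tmul, Dten_tmul, γY_one, γY_gen, vY]
    simp [TensorProduct.smul_tmul', TensorProduct.tmul_smul]
  | mul a b ha hb =>
    rw [γY_mul, map_add, map_mul, map_mul, ha, hb, map_mul, Dten_mul]
    abel
  | add a b ha hb => simp [ha, hb]

lemma prim_γY {w : QYf} (hw : ΔY w = w ⊗ₜ[ℚ] 1 + 1 ⊗ₜ[ℚ] w) :
    ΔY (γY w) = γY w ⊗ₜ[ℚ] 1 + 1 ⊗ₜ[ℚ] γY w := by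
  rw [ΔY_γY, hw, map_add, Dten_tmul, Dten_tmul, γY_one]
  simp

lemma prim_smul {w : QYf} (c : ℚ) (hw : ΔY w = w ⊗ₜ[ℚ] 1 + 1 ⊗ₜ[ℚ] w) :
    ΔY (c • w) = (c • w) ⊗ₜ[ℚ] 1 + 1 ⊗ₜ[ℚ] (c • w) := by
  rw [map_smul, hw, smul_add, TensorProduct.smul_tmul', TensorProduct.smul_tmul']
  simp [TensorProduct.tmul_smul, TensorProduct.smul_tmul']

lemma prim_γY_pow {w : QYf} (hw : ΔY w = w ⊗ₜ[ℚ] 1 + 1 ⊗ₜ[ℚ] w) (i : ℕ) :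
    ΔY ((γY ^ i) w) = (γY ^ i) w ⊗ₜ[ℚ] 1 + 1 ⊗ₜ[ℚ] (γY ^ i) w := by
  induction i with
  | zero => simpa using hw
  | succ k ih =>
    rw [pow_succ', Module.End.mul_apply]
    exact prim_γY ih

end
noncomputable section
section Rpart
variable (R : QYf →ₗ[ℚ] QYf)

lemma S_anti (hRanti : ∀ a b : QYf, R (a * b) = R b * R a) (u v : QYf ⊗[ℚ] QYf) :
    TensorProduct.map R R (u * v) = TensorProduct.map R R v * TensorProduct.map R R u := by
  induction u using TensorProduct.induction_on with
  | zero => simp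
  | tmul a b =>
    induction v using TensorProduct.induction_on with
    | zero => simp
    | tmul c d =>
      rw [Algebra.TensorProduct.tmul_mul_tmul, TensorProduct.map_tmul, TensorProduct.map_tmul,
        TensorProduct.map_tmul, hRanti, hRanti, Algebra.TensorProduct.tmul_mul_tmul]
    | add v₁ v₂ h1 h2 =>
      rw [mul_add, map_add, h1, h2, map_add, add_mul]
  | add u₁ u₂ h1 h2 =>
    rw [add_mul, map_add, h1, h2, map_add, mul_add]

lemma ΔY_R (hR1 : R 1 = 1) (hRanti : ∀ a b : QYf, R (a * b) = R b * R a)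
    (hRgen : ∀ n : ℕ+, R (y n) = y n) (a : QYf) :
    ΔY (R a) = TensorProduct.map R R ((Algebra.TensorProduct.comm ℚ QYf QYf) (ΔY a)) := by
  induction a using FreeAlgebra.induction with
  | grade0 r =>
    simp only [AlgHom.commutes, Algebra.algebraMap_eq_smul_one, map_smul, hR1, map_one]
    rw [show (1 : QYf ⊗[ℚ] QYf) = (1 : QYf) ⊗ₜ[ℚ] (1 : QYf) from rfl,
      TensorProduct.map_tmul, hR1]
  | grade1 n =>
    rw [show FreeAlgebra.ι ℚ n = y n from rfl]
    rw [hRgen, ΔY_gen, map_add, Algebra.TensorProduct.comm_tmul, Algebra.TensorProduct.comm_tmul,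
      map_add, TensorProduct.map_tmul, TensorProduct.map_tmul, hR1, hRgen]
    abel
  | mul a b ha hb =>
    rw [hRanti, map_mul, ha, hb, map_mul, map_mul, S_anti R hRanti]
  | add a b ha hb => simp [ha, hb]

lemma prim_R (hR1 : R 1 = 1) (hRanti : ∀ a b : QYf, R (a * b) = R b * R a)
    (hRgen : ∀ n : ℕ+, R (y n) = y n) {w : QYf} (hw : ΔY w = w ⊗ₜ[ℚ] 1 + 1 ⊗ₜ[ℚ] w) :
    ΔY (R w) = R w ⊗ₜ[ℚ] 1 + 1 ⊗ₜ[ℚ] R w := by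
  rw [ΔY_R R hR1 hRanti hRgen, hw, map_add, Algebra.TensorProduct.comm_tmul,
    Algebra.TensorProduct.comm_tmul, map_add, TensorProduct.map_tmul, TensorProduct.map_tmul, hR1]
  abel

end Rpart
end
noncomputable section

/-- Reads a word in `x0, x1` left to right; state `k` counts pending `x0`'s.
Blocks `x0^(n-1) x1` become `C (y n)`, trailing `x0^k` becomes `X^k`. -/
def Dw : List (Fin 2) → ℕ → Polynomial QYf
  | [], k => Polynomial.X ^ k
  | a :: rest, k =>
    if a = 0 then Dw rest (k + 1) else Polynomial.C (y ⟨k + 1, Nat.succ_pos k⟩) * Dw rest 0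

@[simp] lemma Dw_nil (k : ℕ) : Dw [] k = Polynomial.X ^ k := rfl

@[simp] lemma Dw_cons0 (l : List (Fin 2)) (k : ℕ) : Dw ((0 : Fin 2) :: l) k = Dw l (k + 1) := by
  simp [Dw]

@[simp] lemma Dw_cons1 (l : List (Fin 2)) (k : ℕ) :
    Dw ((1 : Fin 2) :: l) k = Polynomial.C (y ⟨k + 1, Nat.succ_pos k⟩) * Dw l 0 := by
  simp [Dw]

lemma Dw_zeros (m : ℕ) (l : List (Fin 2)) (k : ℕ) :
    Dw (List.replicate m 0 ++ l) k = Dw l (k + m) := by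
  induction m generalizing k with
  | zero => simp
  | succ j ih =>
    rw [List.replicate_succ, List.cons_append, Dw_cons0, ih]
    ring_nf

noncomputable def Lmap : MonoidAlgebra ℚ (FreeMonoid (Fin 2)) →ₗ[ℚ] Polynomial QYf :=
  Finsupp.lsum ℚ (fun w => LinearMap.toSpanSingleton ℚ _ (Dw (FreeMonoid.toList w) 0)) ∘ₗ
    (MonoidAlgebra.coeffLinearEquiv ℚ).toLinearMap

@[simp] lemma Lmap_single (w : FreeMonoid (Fin 2)) (c : ℚ) :
    Lmap (MonoidAlgebra.single w c) = c • Dw (FreeMonoid.toList w) 0 := by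
  classical
  rw [Lmap, LinearMap.comp_apply]
  erw [Finsupp.lsum_apply, Finsupp.sum_single_index (by simp)]
  simp [LinearMap.toSpanSingleton_apply]

noncomputable def eX : QX ≃ₐ[ℚ] MonoidAlgebra ℚ (FreeMonoid (Fin 2)) :=
  FreeAlgebra.equivMonoidAlgebraFreeMonoid

noncomputable def Φ : QX →ₗ[ℚ] Polynomial QYf := Lmap ∘ₗ eX.toLinearMap

lemma Φ_apply (a : QX) : Φ a = Lmap (eX a) := rfl

lemma eX_ι (i : Fin 2) : eX (FreeAlgebra.ι ℚ i) = MonoidAlgebra.single (FreeMonoid.of i) 1 := by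
  simp [eX, FreeAlgebra.equivMonoidAlgebraFreeMonoid]

lemma toList_zeros (a : ℕ) :
    FreeMonoid.toList ((FreeMonoid.of (0 : Fin 2)) ^ a) = List.replicate a 0 := by
  induction a with
  | zero => rfl
  | succ j ih =>
    rw [pow_succ', FreeMonoid.toList_mul, ih, FreeMonoid.toList_of]
    simp [List.replicate_succ]

lemma eX_x0_pow (a : ℕ) :
    eX (x0 ^ a) = MonoidAlgebra.single ((FreeMonoid.of (0 : Fin 2)) ^ a) 1 := by
  rw [map_pow, x0, eX_ι, MonoidAlgebra.single_pow, one_pow]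

lemma Φ_x0_pow (i : ℕ) : Φ (x0 ^ i) = Polynomial.X ^ i := by
  rw [Φ_apply, eX_x0_pow, Lmap_single, toList_zeros, one_smul,
    show List.replicate i (0 : Fin 2) = List.replicate i 0 ++ [] from (List.append_nil _).symm,
    Dw_zeros]
  simp

end
noncomputable section

lemma mul_key (n : ℕ+) (z : QX) :
    Φ ((x0 ^ ((n : ℕ) - 1) * x1) * z) = Polynomial.C (y n) * Φ z := by
  obtain ⟨m, rfl⟩ := eX.symm.surjective z
  induction m using MonoidAlgebra.induction_linear with
  | zero => simp
  | add u v hu hv =>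
    rw [map_add, map_add, mul_add, map_add, mul_add, hu, hv]
  | single w c =>
    have h1 : eX ((x0 ^ ((n : ℕ) - 1) * x1) * eX.symm (MonoidAlgebra.single w c))
        = MonoidAlgebra.single
            ((FreeMonoid.of (0 : Fin 2)) ^ ((n : ℕ) - 1) * FreeMonoid.of 1 * w) c := by
      rw [map_mul, map_mul, eX_x0_pow, AlgEquiv.apply_symm_apply, x1, eX_ι,
        MonoidAlgebra.single_mul_single, MonoidAlgebra.single_mul_single, one_mul, one_mul]
    rw [Φ_apply, h1, Lmap_single, Φ_apply, AlgEquiv.apply_symm_apply, Lmap_single,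
      FreeMonoid.toList_mul, FreeMonoid.toList_mul, toList_zeros, FreeMonoid.toList_of,
      List.append_assoc, Dw_zeros, List.singleton_append, Dw_cons1, zero_add,
      mul_smul_comm]
    have hyn : (⟨(n : ℕ) - 1 + 1, Nat.succ_pos _⟩ : ℕ+) = n := by
      ext
      exact Nat.succ_pred_eq_of_pos n.pos
    rw [hyn]

lemma jx_key (b : QYf) (z : QX) : Φ (jmap b * z) = Polynomial.C b * Φ z := by
  induction b using FreeAlgebra.induction generalizing z with
  | grade0 r =>
    rw [AlgHom.commutes, Algebra.algebraMap_eq_smul_one, smul_mul_assoc, one_mul, map_smul,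
      show Polynomial.C ((algebraMap ℚ (FreeAlgebra ℚ ℕ+)) r)
        = algebraMap ℚ (Polynomial QYf) r from rfl, ← Algebra.smul_def]
  | grade1 n =>
    rw [show jmap (FreeAlgebra.ι ℚ n) = x0 ^ ((n : ℕ) - 1) * x1 from jmap_gen n]
    exact mul_key n z
  | mul a b ha hb =>
    rw [show jmap (a * b) = jmap a * jmap b from map_mul jmap a b, mul_assoc, ha, hb,
      show Polynomial.C (a * b) = Polynomial.C a * Polynomial.C b from map_mul _ a b, mul_assoc]
  | add a b ha hb =>
    rw [show jmap (a + b) = jmap a + jmap b from map_add jmap a b, add_mul, map_add, ha, hb,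
      show Polynomial.C (a + b) = Polynomial.C a + Polynomial.C b from map_add _ a b, add_mul]

lemma Φ_jx_pow (b : QYf) (i : ℕ) : Φ (jmap b * x0 ^ i) = Polynomial.monomial i b := by
  rw [jx_key, Φ_x0_pow, Polynomial.C_mul_X_pow_eq_monomial]

lemma gamma_pow_j (γ : Module.End ℚ QX)
    (hγleib : ∀ a b : QX, γ (a * b) = γ a * b + a * γ b)
    (hγ0 : γ x0 = 1) (hγ1 : γ x1 = 0) (g : QYf) (i : ℕ) :
    (γ ^ i) (jmap g) = jmap ((γY ^ i) g) := by
  induction i with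
  | zero => rfl
  | succ k ih =>
    rw [pow_succ', pow_succ', Module.End.mul_apply, Module.End.mul_apply, ih,
      j_gammaY γ hγleib hγ0 hγ1]

end

/-- Let `g ∈ Lie(Y)` (primitive for `Δ_Y`) and `f = sec(g) = ∑ᵢ ((-1)^i/i!) γ₀^i(g) x₀^i`,
a homogeneous weight-`p` element written `f = ∑_{i=0}^p fᵢ x₀^i` with `fᵢ ∈ ℚ⟨Y⟩`
(here `γ₀` is the derivation of `ℚ⟨X⟩` with `γ₀(x₀)=1, γ₀(x₁)=0`, vanishing on `f` beyond
order `p`).  Then each `fᵢ` and each `f̄ᵢ = (-1)^p R_Y(fᵢ)` (with `R_Y` word reversal on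
`ℚ⟨Y⟩`) lies in `Lie(Y)`, i.e. is primitive for `Δ_Y`. -/
theorem stmt_17
    (γ : Module.End ℚ QX)
    (hγleib : ∀ a b : QX, γ (a * b) = γ a * b + a * γ b)
    (hγ0 : γ x0 = 1) (hγ1 : γ x1 = 0)
    (R : QYf →ₗ[ℚ] QYf)
    (hR1 : R 1 = 1)
    (hRanti : ∀ a b : QYf, R (a * b) = R b * R a)
    (hRgen : ∀ n : ℕ+, R (y n) = y n)
    (gElt : QYf)
    (hg : ΔY gElt = gElt ⊗ₜ[ℚ] 1 + 1 ⊗ₜ[ℚ] gElt)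
    (p : ℕ)
    (hvan : ∀ i : ℕ, p < i → (γ ^ i) (jmap gElt) = 0)
    (fi : ℕ → QYf)
    (hf : ∑ i ∈ Finset.range (p + 1),
        ((-1 : ℚ) ^ i / (i.factorial : ℚ)) • ((γ ^ i) (jmap gElt) * x0 ^ i)
      = ∑ i ∈ Finset.range (p + 1), jmap (fi i) * x0 ^ i) :
    ∀ i ≤ p,
      (ΔY (fi i) = fi i ⊗ₜ[ℚ] 1 + 1 ⊗ₜ[ℚ] fi i) ∧
      (ΔY ((-1 : ℚ) ^ p • R (fi i)) =
        ((-1 : ℚ) ^ p • R (fi i)) ⊗ₜ[ℚ] 1 + 1 ⊗ₜ[ℚ] ((-1 : ℚ) ^ p • R (fi i))) := by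
  have hΦ := congrArg Φ hf
  rw [map_sum, map_sum,
    Finset.sum_congr rfl (fun j _ => by
      rw [map_smul, gamma_pow_j γ hγleib hγ0 hγ1, Φ_jx_pow, Polynomial.smul_monomial]),
    Finset.sum_congr rfl (fun j _ => Φ_jx_pow (fi j) j)] at hΦ
  intro i hip
  have hmem : i ∈ Finset.range (p + 1) := Finset.mem_range.mpr (Nat.lt_succ_of_le hip)
  have hco := congrArg (fun q => Polynomial.coeff q i) hΦ
  simp only [Polynomial.finset_sum_coeff, Polynomial.coeff_monomial] at hco
  rw [Finset.sum_ite_eq' _ i (fun j => ((-1:ℚ)^j / (j.factorial : ℚ)) • (γY ^ j) gElt),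
    Finset.sum_ite_eq' _ i fi, if_pos hmem, if_pos hmem] at hco
  have hfi : fi i = ((-1:ℚ)^i / (i.factorial : ℚ)) • (γY ^ i) gElt := hco.symm
  have h1 : ΔY (fi i) = fi i ⊗ₜ[ℚ] 1 + 1 ⊗ₜ[ℚ] fi i := by
    rw [hfi]
    exact prim_smul _ (prim_γY_pow hg i)
  refine ⟨h1, ?_⟩
  exact prim_smul _ (prim_R R hR1 hRanti hRgen h1)
end
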